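/- In the setting of Siegel's construction (Lemma 4.1), define recursively polynomials P^{[k]}_κ(z) for k ≥ 1 and κ ∈ Ω by P^{[1]}_κ = P_κ and P^{[k+1]}_κ(z) = T(z)( (d/dz) P^{[k]}_κ(z) + (|κ|+1−N) Σ_{l=1}^m S_{l,0}(z) P^{[k]}_{κ−e_l}(z) − Σ_{l=1}^m Σ_{j=1}^m (κ_j − δ_{l,j} + 1) S_{l,j}(z) P^{[k]}_{κ−e_l+e_j}(z) ), and write P^{[k]}_κ(z) = Σ_{ν=0}^{M+t(k−1)−1} (π_{k,κ,ν}/ν!) z^ν. Then for every κ ∈ Ω, every k ≥ 1 and every 0 ≤ ν ≤ M+t(k−1)−1, one has π_{k,κ,ν} ∈ ℤ, and moreover |π_{k,κ,ν}| ≤ C₀^{ωM/η} M^{C₂ηM} whenever k < C₁ηM, where C₀, C₁, C₂ are positive constants depending only on f_1, …, f_m. -/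

import Mathlib

open Polynomial

noncomputable section

/-- The entire function `f(z) = ∑ aₙ zⁿ/n!` attached to a sequence of rational
Taylor coefficients. -/
def Efun (a : ℕ → ℚ) : ℂ → ℂ := fun z => ∑' n : ℕ, (a n : ℂ) * z ^ n / n.factorial

/-- A polynomial with coefficients in `ℚ̄` (the algebraic numbers inside `ℂ`). -/
def AlgCoeffs (p : Polynomial ℂ) : Prop := ∀ n, IsAlgebraic ℚ (p.coeff n)

/-- `f` is a solution of a nonzero linear differential equation with coefficients
in `ℚ̄(z)` (equivalently, after clearing denominators, in `ℚ̄[z]`). -/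
def SatisfiesAlgODE (f : ℂ → ℂ) : Prop :=
  ∃ (r : ℕ) (p : Fin (r + 1) → Polynomial ℂ),
    (∀ j, AlgCoeffs (p j)) ∧ (∃ j, p j ≠ 0) ∧
      ∀ z : ℂ, ∑ j : Fin (r + 1), (p j).eval z * iteratedDeriv (j : ℕ) f z = 0

/-- `∑ aₙ zⁿ/n!` is an E-function in the strict sense with rational coefficients. -/
def IsEFunQ (a : ℕ → ℚ) : Prop :=
  SatisfiesAlgODE (Efun a) ∧
    ∃ C : ℝ, 0 < C ∧ (∀ n, |(a n : ℝ)| ≤ C ^ (n + 1)) ∧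
      ∃ d : ℕ → ℕ, (∀ n, 1 ≤ d n ∧ (d n : ℝ) ≤ C ^ (n + 1)) ∧
        ∀ n, ∀ m ≤ n, ∃ k : ℤ, (d n : ℚ) * a m = (k : ℚ)
/-- The weight `|κ| = κ₁ + … + κ_m` of a multi-index. -/
def wt {m : ℕ} (κ : Fin m → ℕ) : ℕ := ∑ j, κ j

/-- `κ ∈ Ω`, i.e. `N - 1 ≤ |κ| ≤ N`. -/
def inOmega (m N : ℕ) (κ : Fin m → ℕ) : Prop := N - 1 ≤ wt κ ∧ wt κ ≤ N

/-- `κ ∈ Θ`, i.e. `|κ| = N`. -/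
def inTheta (m N : ℕ) (κ : Fin m → ℕ) : Prop := wt κ = N

/-- `κ - e_j` (only meaningful when `κ j ≥ 1`; guarded at use sites). -/
def sub1 {m : ℕ} (κ : Fin m → ℕ) (j : Fin m) : Fin m → ℕ :=
  Function.update κ j (κ j - 1)

/-- `κ + e_j`. -/
def add1 {m : ℕ} (κ : Fin m → ℕ) (j : Fin m) : Fin m → ℕ :=
  Function.update κ j (κ j + 1)

/-- `ω = #Ω = C(N+m-2, m-1) + C(N+m-1, m-1)`. -/
def omegaCard (m N : ℕ) : ℕ := (N + m - 2).choose (m - 1) + (N + m - 1).choose (m - 1)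

/-- `θ = #Θ = C(N+m-1, m-1)`. -/
def thetaCard (m N : ℕ) : ℕ := (N + m - 1).choose (m - 1)

/-- The functions `1, f₁, …, f_m` are linearly independent over `ℂ(z)` (equivalently,
over `ℂ[z]`). -/
def OneFLinIndep (m : ℕ) (f : Fin m → ℂ → ℂ) : Prop :=
  ∀ (Q0 : Polynomial ℂ) (Q : Fin m → Polynomial ℂ),
    (∀ z : ℂ, Q0.eval z + ∑ j : Fin m, (Q j).eval z * f j z = 0) →
      Q0 = 0 ∧ ∀ j, Q j = 0

/-- The Siegel construction (Lemma 4.1): the polynomials `P_κ` (`κ ∈ Ω`, extended by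
`0` off `Ω`) have degree `< M`, are not all zero, and for every `κ ∈ Θ` the remainder
`P_κ + ∑_j P_{κ-e_j} f_j` vanishes at `0` with order at least `K`. -/
def SiegelP (m N M K : ℕ) (f : Fin m → ℂ → ℂ) (P : (Fin m → ℕ) → Polynomial ℂ) : Prop :=
  (∀ κ, ¬ inOmega m N κ → P κ = 0) ∧
  (∀ κ, (P κ).degree < (M : WithBot ℕ)) ∧
  (∃ κ, P κ ≠ 0) ∧
  ∀ κ, inTheta m N κ → ∀ l < K, iteratedDeriv l
    (fun z => (P κ).eval z +
      ∑ j : Fin m, (if κ j = 0 then 0 else (P (sub1 κ j)).eval z * f j z)) 0 = 0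
/-- The recursively defined polynomials `P^{[k]}_κ` of Zudilin's construction
(index shift: `Prec … k` is the paper's `P^{[k+1]}`): `P^{[1]}_κ = P_κ` and
`P^{[k+1]}_κ = T·(d/dz)P^{[k]}_κ + (|κ|+1-N) ∑_l (T S_{l,0}) P^{[k]}_{κ-e_l}
  - ∑_{l,j} (κ_j - δ_{l,j} + 1)(T S_{l,j}) P^{[k]}_{κ-e_l+e_j}`,
where `TS l j` denotes the polynomial `T(z)·S_{l,j}(z)` (with `TS l 0 = T·S_{l,0}` and
`TS l j.succ = T·S_{l,j}`), and terms whose multi-index has a negative component are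
omitted. -/
def Prec (m N : ℕ) (Tp : Polynomial ℂ) (TS : Fin m → Fin (m + 1) → Polynomial ℂ)
    (P : (Fin m → ℕ) → Polynomial ℂ) : ℕ → (Fin m → ℕ) → Polynomial ℂ
  | 0 => P
  | k + 1 => fun κ =>
      Tp * Polynomial.derivative (Prec m N Tp TS P k κ)
        + Polynomial.C (((wt κ : ℂ)) + 1 - (N : ℂ)) *
            ∑ l : Fin m, (if κ l = 0 then 0 else TS l 0 * Prec m N Tp TS P k (sub1 κ l))
        - ∑ l : Fin m, ∑ j : Fin m,
            Polynomial.C ((κ j : ℂ) - (if l = j then 1 else 0) + 1) *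
              (if κ l = 0 then 0 else TS l j.succ * Prec m N Tp TS P k (add1 (sub1 κ l) j))

/-!
Write a polynomial as `∑ aᵥ zᵛ/ν!`. Those with all `aᵥ ∈ ℤ` form a subring of `ℂ[X]` that
contains `ℤ[X]` and is stable under `d/dz`; the recursion for `P^{[k+1]}` only uses ring
operations, `d/dz` and the integer polynomials `T`, `T·S_{l,j}`, so integrality propagates
from the `P_κ`. One step of the recursion raises the degree by at most `t` and multiplies the
largest `|aᵥ|` by at most `D·(M + tk)^t`, with `D` depending on `N`, `m`, `t`, `T` and the
`T·S_{l,j}` only. Hence after `k < ηM/(t+1)` steps the factor is at most `M^{ηM}` as soon as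
`M ≥ 2^t D`.
-/

open scoped Nat

namespace Polynomial

section DegreeLT

variable {R : Type*} [CommRing R] {S t : ℕ} {p q : R[X]}

lemma derivative_mem_degreeLT (hp : p ∈ degreeLT R S) : derivative p ∈ degreeLT R S :=
  mem_degreeLT.2 (degree_derivative_le.trans_lt (mem_degreeLT.1 hp))

lemma mul_mem_degreeLT (hq : q.natDegree ≤ t) (hp : p ∈ degreeLT R S) :
    q * p ∈ degreeLT R (S + t) := by
  rw [mem_degreeLT, degree_lt_iff_coeff_zero]
  intro ν hν
  rw [coeff_mul]
  refine Finset.sum_eq_zero fun x hx => ?_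
  rw [Finset.HasAntidiagonal.mem_antidiagonal] at hx
  rcases le_or_gt x.1 t with h | h
  · rw [(degree_lt_iff_coeff_zero _ _).1 (mem_degreeLT.1 hp) x.2 (by omega), mul_zero]
  · rw [coeff_eq_zero_of_natDegree_lt (hq.trans_lt h), zero_mul]

end DegreeLT

/-- The polynomials `∑ aᵥ zᵛ/ν!` with all `aᵥ ∈ ℤ` (polynomial part of the Hurwitz ring). -/
def hurwitzSubring : Subring ℂ[X] where
  carrier := {p | ∀ ν, ∃ z : ℤ, (ν ! : ℂ) * p.coeff ν = z}
  zero_mem' ν := ⟨0, by simp⟩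
  one_mem' ν := ⟨if ν = 0 then 1 else 0, by
    rcases eq_or_ne ν 0 with rfl | h <;> simp [coeff_one, *]⟩
  add_mem' {p q} hp hq ν := by
    obtain ⟨a, ha⟩ := hp ν
    obtain ⟨b, hb⟩ := hq ν
    exact ⟨a + b, by rw [coeff_add, mul_add, ha, hb]; push_cast; ring⟩
  neg_mem' {p} hp ν := by
    obtain ⟨a, ha⟩ := hp ν
    exact ⟨-a, by rw [coeff_neg, mul_neg, ha]; push_cast; ring⟩
  mul_mem' {p q} hp hq ν := by
    choose a ha using hp
    choose b hb using hq
    -- `ν! (pq)_ν = ∑_{i+j=ν} C(ν,j) (i! p_i) (j! q_j)`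
    refine ⟨∑ x ∈ Finset.HasAntidiagonal.antidiagonal ν, (ν.choose x.2 : ℤ) * a x.1 * b x.2, ?_⟩
    rw [coeff_mul, Finset.mul_sum]
    push_cast
    refine Finset.sum_congr rfl fun x hx => ?_
    rw [Finset.HasAntidiagonal.mem_antidiagonal] at hx
    rw [← ha, ← hb, ← hx, ← Nat.add_choose_mul_factorial_mul_factorial x.1 x.2]
    push_cast
    ring

lemma mem_hurwitzSubring {p : ℂ[X]} :
    p ∈ hurwitzSubring ↔ ∀ ν, ∃ z : ℤ, (ν ! : ℂ) * p.coeff ν = z := Iff.rfl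

lemma mem_hurwitzSubring_of_coeff_int {p : ℂ[X]} (hp : ∀ n, ∃ z : ℤ, p.coeff n = z) :
    p ∈ hurwitzSubring := mem_hurwitzSubring.2 fun ν => by
  obtain ⟨z, hz⟩ := hp ν
  exact ⟨ν ! * z, by rw [hz]; push_cast; ring⟩

lemma derivative_mem_hurwitzSubring {p : ℂ[X]} (hp : p ∈ hurwitzSubring) :
    derivative p ∈ hurwitzSubring := mem_hurwitzSubring.2 fun ν => by
  obtain ⟨z, hz⟩ := mem_hurwitzSubring.1 hp (ν + 1)
  exact ⟨z, by rw [coeff_derivative, ← hz, Nat.factorial_succ]; push_cast; ring⟩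

def HurwitzBounded (p : ℂ[X]) (B : ℝ) : Prop := ∀ ν, ‖(ν ! : ℂ) * p.coeff ν‖ ≤ B

namespace HurwitzBounded

variable {p q : ℂ[X]} {A B B' : ℝ}

lemma nonneg (hp : HurwitzBounded p B) : 0 ≤ B := (norm_nonneg _).trans (hp 0)

lemma mono (hp : HurwitzBounded p B) (h : B ≤ B') : HurwitzBounded p B' :=
  fun ν => (hp ν).trans h

lemma zero (hB : 0 ≤ B) : HurwitzBounded 0 B := fun ν => by simpa using hB

lemma add (hp : HurwitzBounded p B) (hq : HurwitzBounded q B') :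
    HurwitzBounded (p + q) (B + B') := fun ν => by
  rw [coeff_add, mul_add]
  exact (norm_add_le _ _).trans (add_le_add (hp ν) (hq ν))

lemma sub (hp : HurwitzBounded p B) (hq : HurwitzBounded q B') :
    HurwitzBounded (p - q) (B + B') := fun ν => by
  rw [coeff_sub, mul_sub]
  exact (norm_sub_le _ _).trans (add_le_add (hp ν) (hq ν))

lemma C_mul (hp : HurwitzBounded p B) (c : ℂ) : HurwitzBounded (C c * p) (‖c‖ * B) := fun ν => by
  rw [coeff_C_mul, mul_left_comm, norm_mul]
  exact mul_le_mul_of_nonneg_left (hp ν) (norm_nonneg c)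

lemma sum {ι : Type*} {s : Finset ι} {f : ι → ℂ[X]}
    (hf : ∀ i ∈ s, HurwitzBounded (f i) B) : HurwitzBounded (∑ i ∈ s, f i) (s.card * B) := by
  classical
  induction s using Finset.induction_on with
  | empty => simpa using zero le_rfl
  | insert i s hi ih =>
    rw [Finset.sum_insert hi, Finset.card_insert_of_notMem hi]
    refine ((hf i (Finset.mem_insert_self i s)).add
      (ih fun j hj => hf j (Finset.mem_insert_of_mem hj))).mono (le_of_eq ?_)
    push_cast
    ring

lemma derivative (hp : HurwitzBounded p B) : HurwitzBounded (derivative p) B := fun ν => by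
  rw [coeff_derivative]
  convert hp (ν + 1) using 2
  push_cast [Nat.factorial_succ]
  ring

variable {S t : ℕ}

lemma X_pow_mul (hp : HurwitzBounded p B) (hdeg : p ∈ degreeLT ℂ S) {s : ℕ} (hs : s ≤ t) :
    HurwitzBounded (X ^ s * p) (B * (S + t) ^ t) := fun ν => by
  have hB := hp.nonneg
  rw [coeff_X_pow_mul']
  split_ifs with hsν
  swap
  · simpa using by positivity
  rcases lt_or_ge (ν - s) S with hνS | hνS
  swap
  · rw [(degree_lt_iff_coeff_zero _ _).1 (mem_degreeLT.1 hdeg) _ hνS]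
    simpa using by positivity
  have hfac : (ν ! : ℂ) = ν.descFactorial s * (ν - s)! := by
    rw [← Nat.factorial_mul_descFactorial hsν]; push_cast; ring
  have hdesc : (ν.descFactorial s : ℝ) ≤ (S + t) ^ t := by
    have : ν.descFactorial s ≤ (S + t) ^ t :=
      calc ν.descFactorial s ≤ ν ^ s := Nat.descFactorial_le_pow ν s
        _ ≤ (S + t) ^ s := Nat.pow_le_pow_left (by omega) s
        _ ≤ (S + t) ^ t := Nat.pow_le_pow_right (by omega) hs
    exact_mod_cast this
  rw [hfac, mul_assoc, norm_mul, Complex.norm_natCast, mul_comm B]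
  exact mul_le_mul hdesc (hp _) (norm_nonneg _) (by positivity)

lemma mul_left (hp : HurwitzBounded p B) (hdeg : p ∈ degreeLT ℂ S)
    (hq : q.natDegree ≤ t) (hA : ∀ s, ‖q.coeff s‖ ≤ A) :
    HurwitzBounded (q * p) ((t + 1) * (A * (B * (S + t) ^ t))) := by
  have hA0 : 0 ≤ A := (norm_nonneg _).trans (hA 0)
  have hXp : ∀ s ∈ Finset.range (t + 1), HurwitzBounded (C (q.coeff s) * (X ^ s * p))
      (A * (B * (S + t) ^ t)) := fun s hs =>
    ((hp.X_pow_mul hdeg (Finset.mem_range_succ_iff.1 hs)).C_mul _).mono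
      (mul_le_mul_of_nonneg_right (hA s) (by positivity [hp.nonneg]))
  rw [as_sum_range_C_mul_X_pow' q (Nat.lt_succ_of_le hq), Finset.sum_mul]
  simpa [mul_assoc] using sum hXp

end HurwitzBounded

lemma mem_hurwitzSubring_and_hurwitzBounded_of_degree_lt {p : ℂ[X]} {M : ℕ} {B : ℝ}
    {z : ℕ → ℤ} (hB : 0 ≤ B) (hdeg : p.degree < M)
    (hz : ∀ ν < M, p.coeff ν = z ν / (ν ! : ℂ) ∧ (|z ν| : ℝ) ≤ B) :
    p ∈ hurwitzSubring ∧ HurwitzBounded p B := by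
  have key : ∀ ν, ∃ w : ℤ, (ν ! : ℂ) * p.coeff ν = w ∧ (|w| : ℝ) ≤ B := fun ν => by
    rcases lt_or_ge ν M with hν | hν
    · refine ⟨z ν, ?_, (hz ν hν).2⟩
      rw [(hz ν hν).1, mul_div_cancel₀ _ (by exact_mod_cast ν.factorial_ne_zero)]
    · exact ⟨0, by simp [(degree_lt_iff_coeff_zero _ _).1 hdeg ν hν], by simpa using hB⟩
  refine ⟨mem_hurwitzSubring.2 fun ν => (key ν).imp fun w hw => hw.1, fun ν => ?_⟩
  obtain ⟨w, hw, hwB⟩ := key ν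
  rwa [hw, Complex.norm_intCast]

lemma exists_norm_coeff_le {ι : Type*} [Fintype ι] (q : ι → ℂ[X]) :
    ∃ A, ∀ i s, ‖(q i).coeff s‖ ≤ A :=
  ⟨∑ i, (q i).supNorm, fun i s => (le_supNorm _ s).trans
    (Finset.single_le_sum (fun _ _ => supNorm_nonneg _) (Finset.mem_univ i))⟩

end Polynomial

lemma SiegelP.mem_hurwitzSubring_and_hurwitzBounded {m N M K : ℕ} {f : Fin m → ℂ → ℂ}
    {P : (Fin m → ℕ) → ℂ[X]} {pi : (Fin m → ℕ) → ℕ → ℤ} {B : ℝ} (hP : SiegelP m N M K f P)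
    (hB : 0 ≤ B) (hpi : ∀ κ, inOmega m N κ → ∀ ν < M,
      (P κ).coeff ν = pi κ ν / (ν ! : ℂ) ∧ (|pi κ ν| : ℝ) ≤ B) (κ : Fin m → ℕ) :
    P κ ∈ hurwitzSubring ∧ HurwitzBounded (P κ) B := by
  by_cases hΩ : inOmega m N κ
  · exact mem_hurwitzSubring_and_hurwitzBounded_of_degree_lt hB (hP.2.1 κ) (hpi κ hΩ)
  · rw [hP.1 κ hΩ]
    exact ⟨zero_mem _, HurwitzBounded.zero hB⟩

lemma wt_update_add {m : ℕ} (κ : Fin m → ℕ) (l : Fin m) (v : ℕ) :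
    wt (Function.update κ l v) + κ l = wt κ + v := by
  unfold wt
  rw [Finset.sum_update_of_mem (Finset.mem_univ l), ← Finset.sum_erase_add Finset.univ κ
    (Finset.mem_univ l), Finset.sdiff_singleton_eq_erase]
  ring

lemma wt_sub1_le {m : ℕ} (κ : Fin m → ℕ) (l : Fin m) : wt (sub1 κ l) ≤ wt κ := by
  have := wt_update_add κ l (κ l - 1)
  unfold sub1
  omega

lemma wt_add1_sub1 {m : ℕ} {κ : Fin m → ℕ} {l : Fin m} (h : κ l ≠ 0) (j : Fin m) :
    wt (add1 (sub1 κ l) j) = wt κ := by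
  have h1 := wt_update_add κ l (κ l - 1)
  have h2 := wt_update_add (sub1 κ l) j (sub1 κ l j + 1)
  unfold add1
  unfold sub1 at h1 h2 ⊢
  omega

lemma le_wt {m : ℕ} (κ : Fin m → ℕ) (j : Fin m) : κ j ≤ wt κ :=
  Finset.single_le_sum (fun i _ => Nat.zero_le (κ i)) (Finset.mem_univ j)

lemma norm_wt_add_one_sub_le {m N : ℕ} {κ : Fin m → ℕ} (hκ : wt κ ≤ N) :
    ‖(wt κ : ℂ) + 1 - N‖ ≤ N + 1 := by
  have hwt : (wt κ : ℝ) ≤ N := by exact_mod_cast hκ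
  rw [show (wt κ : ℂ) + 1 - N = ((wt κ + 1 - N : ℝ) : ℂ) by push_cast; ring,
    Complex.norm_real, Real.norm_eq_abs, abs_le]
  constructor <;> linarith [(wt κ).cast_nonneg (α := ℝ)]

lemma norm_apply_sub_ite_add_one_le {m N : ℕ} {κ : Fin m → ℕ} (hκ : wt κ ≤ N) (l j : Fin m) :
    ‖(κ j : ℂ) - (if l = j then 1 else 0) + 1‖ ≤ N + 1 := by
  have hj : (κ j : ℝ) ≤ N := by exact_mod_cast (le_wt κ j).trans hκ
  rw [show (κ j : ℂ) - (if l = j then 1 else 0) + 1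
      = ((κ j - (if l = j then 1 else 0) + 1 : ℝ) : ℂ) by push_cast [apply_ite]; ring,
    Complex.norm_real, Real.norm_eq_abs, abs_le]
  constructor <;> split_ifs <;> linarith [(κ j).cast_nonneg (α := ℝ)]

section IteratedPade

variable {m N : ℕ} {Tp : ℂ[X]} {TS : Fin m → Fin (m + 1) → ℂ[X]}

def precStep (m N : ℕ) (Tp : ℂ[X]) (TS : Fin m → Fin (m + 1) → ℂ[X])
    (Q : (Fin m → ℕ) → ℂ[X]) (κ : Fin m → ℕ) : ℂ[X] :=
  Tp * derivative (Q κ)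
    + C ((wt κ : ℂ) + 1 - N) * ∑ l : Fin m, (if κ l = 0 then 0 else TS l 0 * Q (sub1 κ l))
    - ∑ l : Fin m, ∑ j : Fin m, C ((κ j : ℂ) - (if l = j then 1 else 0) + 1) *
        (if κ l = 0 then 0 else TS l j.succ * Q (add1 (sub1 κ l) j))

lemma prec_succ (P : (Fin m → ℕ) → ℂ[X]) (k : ℕ) :
    Prec m N Tp TS P (k + 1) = precStep m N Tp TS (Prec m N Tp TS P k) := rfl

lemma precStep_mem {R : Subring ℂ[X]} (hder : ∀ p ∈ R, derivative p ∈ R) (hTp : Tp ∈ R)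
    (hTS : ∀ l j, TS l j ∈ R) {Q : (Fin m → ℕ) → ℂ[X]} (hQ : ∀ κ, Q κ ∈ R) (κ : Fin m → ℕ) :
    precStep m N Tp TS Q κ ∈ R := by
  have hC : ∀ z : ℤ, C (z : ℂ) ∈ R := fun z => by rw [map_intCast]; exact intCast_mem R z
  have h0 : C ((wt κ : ℂ) + 1 - N) ∈ R := by
    simpa using hC ((wt κ : ℤ) + 1 - N)
  have h1 : ∀ l j : Fin m, C ((κ j : ℂ) - (if l = j then 1 else 0) + 1) ∈ R := fun l j => by
    simpa [apply_ite] using hC ((κ j : ℤ) - (if l = j then 1 else 0) + 1)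
  refine sub_mem (add_mem (mul_mem hTp (hder _ (hQ κ))) (mul_mem h0 (sum_mem fun l _ => ?_)))
    (sum_mem fun l _ => sum_mem fun j _ => mul_mem (h1 l j) ?_) <;>
  split_ifs
  all_goals first | exact zero_mem R | exact mul_mem (hTS _ _) (hQ _)

lemma precStep_mem_degreeLT {S t : ℕ} (hTp : Tp.natDegree ≤ t) (hTS : ∀ l j, (TS l j).natDegree ≤ t)
    {Q : (Fin m → ℕ) → ℂ[X]} (hQ : ∀ κ, Q κ ∈ degreeLT ℂ S) (κ : Fin m → ℕ) :
    precStep m N Tp TS Q κ ∈ degreeLT ℂ (S + t) := by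
  have hprod : ∀ l j κ', TS l j * Q κ' ∈ degreeLT ℂ (S + t) := fun l j κ' =>
    mul_mem_degreeLT (hTS l j) (hQ κ')
  simp only [precStep, ← smul_eq_C_mul]
  refine Submodule.sub_mem _ (Submodule.add_mem _
    (mul_mem_degreeLT hTp (derivative_mem_degreeLT (hQ κ)))
    (Submodule.smul_mem _ _ (Submodule.sum_mem _ fun l _ => ?_)))
    (Submodule.sum_mem _ fun l _ => Submodule.sum_mem _ fun j _ => Submodule.smul_mem _ _ ?_) <;>
  split_ifs
  all_goals first | exact Submodule.zero_mem _ | exact hprod _ _ _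

lemma hurwitzBounded_precStep {S t : ℕ} {A B : ℝ} (hTp : Tp.natDegree ≤ t)
    (hTS : ∀ l j, (TS l j).natDegree ≤ t) (hATp : ∀ s, ‖Tp.coeff s‖ ≤ A)
    (hATS : ∀ l j s, ‖(TS l j).coeff s‖ ≤ A) {Q : (Fin m → ℕ) → ℂ[X]}
    (hQ : ∀ κ, wt κ ≤ N → HurwitzBounded (Q κ) B) (hQdeg : ∀ κ, Q κ ∈ degreeLT ℂ S)
    {κ : Fin m → ℕ} (hκ : wt κ ≤ N) :
    HurwitzBounded (precStep m N Tp TS Q κ)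
      ((N + 1) * (m + 1) ^ 2 * ((t + 1) * (A * (B * (S + t) ^ t)))) := by
  set E := (t + 1) * (A * (B * (S + t) ^ t))
  have hprod : ∀ l j κ', wt κ' ≤ N → HurwitzBounded (TS l j * Q κ') E := fun l j κ' h =>
    (hQ κ' h).mul_left (hQdeg κ') (hTS l j) (hATS l j)
  have h1 : HurwitzBounded (Tp * derivative (Q κ)) E :=
    (hQ κ hκ).derivative.mul_left (derivative_mem_degreeLT (hQdeg κ)) hTp hATp
  have hE0 : 0 ≤ E := h1.nonneg
  have h2 : ∀ l, HurwitzBounded (if κ l = 0 then 0 else TS l 0 * Q (sub1 κ l)) E := fun l => by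
    split_ifs
    exacts [HurwitzBounded.zero hE0, hprod _ _ _ ((wt_sub1_le κ l).trans hκ)]
  have h3 : ∀ l j, HurwitzBounded (C ((κ j : ℂ) - (if l = j then 1 else 0) + 1) *
      (if κ l = 0 then 0 else TS l j.succ * Q (add1 (sub1 κ l) j))) ((N + 1) * E) := fun l j => by
    refine HurwitzBounded.mono (HurwitzBounded.C_mul ?_ _)
      (mul_le_mul_of_nonneg_right (norm_apply_sub_ite_add_one_le hκ l j) hE0)
    split_ifs with hl
    exacts [HurwitzBounded.zero hE0, hprod _ _ _ ((wt_add1_sub1 hl j).trans_le hκ)]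
  have hsum := (h1.add ((HurwitzBounded.sum (s := Finset.univ) fun l _ => h2 l).C_mul
    ((wt κ : ℂ) + 1 - N))).sub (HurwitzBounded.sum (s := Finset.univ) fun l _ =>
      HurwitzBounded.sum (s := Finset.univ) fun j _ => h3 l j)
  refine hsum.mono ?_
  simp only [Finset.card_univ, Fintype.card_fin]
  have hc := norm_wt_add_one_sub_le hκ
  have hmE : 0 ≤ (m : ℝ) * E := by positivity
  nlinarith [mul_le_mul_of_nonneg_right hc hmE]

variable {P : (Fin m → ℕ) → ℂ[X]}

lemma prec_mem {R : Subring ℂ[X]} (hder : ∀ p ∈ R, derivative p ∈ R) (hTp : Tp ∈ R)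
    (hTS : ∀ l j, TS l j ∈ R) (hP : ∀ κ, P κ ∈ R) (k : ℕ) (κ : Fin m → ℕ) :
    Prec m N Tp TS P k κ ∈ R := by
  induction k generalizing κ with
  | zero => exact hP κ
  | succ k ih => exact precStep_mem hder hTp hTS ih κ

variable {M t : ℕ}

lemma prec_mem_degreeLT (hTp : Tp.natDegree ≤ t) (hTS : ∀ l j, (TS l j).natDegree ≤ t)
    (hP : ∀ κ, P κ ∈ degreeLT ℂ M) (k : ℕ) (κ : Fin m → ℕ) :
    Prec m N Tp TS P k κ ∈ degreeLT ℂ (M + t * k) := by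
  induction k generalizing κ with
  | zero => exact hP κ
  | succ k ih =>
    rw [Nat.mul_succ, ← add_assoc]
    exact precStep_mem_degreeLT hTp hTS ih κ

lemma hurwitzBounded_prec {A B : ℝ} (hTp : Tp.natDegree ≤ t)
    (hTS : ∀ l j, (TS l j).natDegree ≤ t) (hATp : ∀ s, ‖Tp.coeff s‖ ≤ A)
    (hATS : ∀ l j s, ‖(TS l j).coeff s‖ ≤ A) (hP : ∀ κ, HurwitzBounded (P κ) B)
    (hPdeg : ∀ κ, P κ ∈ degreeLT ℂ M) (k : ℕ) {κ : Fin m → ℕ} (hκ : wt κ ≤ N) :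
    HurwitzBounded (Prec m N Tp TS P k κ)
      (B * ((N + 1) * (m + 1) ^ 2 * ((t + 1) * A) * (M + t * k) ^ t) ^ k) := by
  have hA : 0 ≤ A := (norm_nonneg _).trans (hATp 0)
  have hB : 0 ≤ B := (hP κ).nonneg
  set D : ℝ := (N + 1) * (m + 1) ^ 2 * ((t + 1) * A)
  induction k generalizing κ with
  | zero => simpa [Prec] using hP κ
  | succ k ih =>
    refine (hurwitzBounded_precStep hTp hTS hATp hATS (fun κ' h => ih h)
      (prec_mem_degreeLT hTp hTS hPdeg k) hκ).mono ?_
    calc _ = B * (D * (M + t * k) ^ t) ^ k * (D * (M + t * (k + 1)) ^ t) := by push_cast; ring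
      _ ≤ B * (D * (M + t * (k + 1)) ^ t) ^ k * (D * (M + t * (k + 1)) ^ t) := by
        gcongr
        linarith
      _ = _ := by push_cast; ring

end IteratedPade

lemma growth_pow_le_rpow {D η : ℝ} {M t k : ℕ} (hD : 0 ≤ D) (hM : D * 2 ^ t ≤ M)
    (hM1 : 1 ≤ M) (hη : η ≤ 1) (hk : (k : ℝ) ≤ 1 / (t + 1) * η * M) :
    (D * (M + t * k) ^ t) ^ k ≤ (M : ℝ) ^ (η * M) := by
  have hM1' : (1 : ℝ) ≤ M := by exact_mod_cast hM1
  have hk : (t + 1) * (k : ℝ) ≤ η * M :=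
    calc (t + 1) * (k : ℝ) ≤ (t + 1) * (1 / (t + 1) * η * M) := by gcongr
      _ = η * M := by field_simp
  have htk : (t : ℝ) * k ≤ M := by nlinarith [(k.cast_nonneg (α := ℝ))]
  have hbase : D * (M + t * k) ^ t ≤ (M : ℝ) ^ (t + 1) :=
    calc D * (M + t * k) ^ t ≤ D * (2 * M) ^ t := by gcongr; linarith
      _ = D * 2 ^ t * M ^ t := by ring
      _ ≤ M * M ^ t := by gcongr
      _ = (M : ℝ) ^ (t + 1) := by ring
  calc (D * (M + t * k) ^ t) ^ k ≤ ((M : ℝ) ^ (t + 1)) ^ k := by gcongr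
    _ = (M : ℝ) ^ (((t + 1) * k : ℕ) : ℝ) := by rw [Real.rpow_natCast, pow_mul]
    _ ≤ (M : ℝ) ^ (η * M) := Real.rpow_le_rpow_of_exponent_le hM1' (by push_cast; exact hk)

theorem integrality_and_bounds_of_iterated_pade_polynomials_general
    (m : ℕ) (a : Fin m → ℕ → ℚ)
    (i₀ τ t : ℕ) (TS : Fin m → Fin (m + 1) → Polynomial ℂ)
    (hTSint : ∀ l j n, ∃ k : ℤ, (TS l j).coeff n = (k : ℂ))
    (ht1 : (Polynomial.C (τ : ℂ) * Polynomial.X ^ i₀ : Polynomial ℂ).natDegree ≤ t)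
    (ht2 : ∀ l j, (TS l j).natDegree ≤ t)
    :
    ∃ C₀ C₁ C₂ : ℝ, 0 < C₀ ∧ 0 < C₁ ∧ 0 < C₂ ∧ ∃ N₀ : ℕ, ∀ N : ℕ, N₀ ≤ N →
      ∀ η : ℝ, 0 < η → η ≤ 1 / (3 * ((N : ℝ) + (m : ℝ) - 1)) →
      ∃ M₀ : ℕ, ∀ M : ℕ, M₀ ≤ M →
      ∀ (P : (Fin m → ℕ) → Polynomial ℂ) (pi : (Fin m → ℕ) → ℕ → ℤ),
        SiegelP m N M
          (Nat.floor (((omegaCard m N : ℝ) - η) * (M : ℝ) / (thetaCard m N : ℝ)))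
          (fun j => Efun (a j)) P →
        (∀ κ, inOmega m N κ → ∀ ν < M,
          (P κ).coeff ν = (pi κ ν : ℂ) / (ν.factorial : ℂ) ∧
          (|pi κ ν| : ℝ) ≤ C₀ ^ ((omegaCard m N : ℝ) * (M : ℝ) / η)) →
        ∀ κ, inOmega m N κ → ∀ k : ℕ, 1 ≤ k → ∀ ν : ℕ,
          ∃ pik : ℤ,
            (Prec m N (Polynomial.C (τ : ℂ) * Polynomial.X ^ i₀) TS P (k - 1) κ).coeff ν
              = (pik : ℂ) / (ν.factorial : ℂ) ∧
            ((k : ℝ) < C₁ * η * (M : ℝ) →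
              (|pik| : ℝ) ≤ C₀ ^ ((omegaCard m N : ℝ) * (M : ℝ) / η) *
                (M : ℝ) ^ (C₂ * η * (M : ℝ))) := by
  set Tp : ℂ[X] := C (τ : ℂ) * X ^ i₀
  have hTp : Tp ∈ hurwitzSubring := mem_hurwitzSubring_of_coeff_int fun n =>
    ⟨if n = i₀ then τ else 0, by rw [coeff_C_mul_X_pow]; split_ifs <;> simp⟩
  obtain ⟨A, hA⟩ := exists_norm_coeff_le fun i : Option (Fin m × Fin (m + 1)) =>
    i.elim Tp fun lj => TS lj.1 lj.2
  refine ⟨2, 1 / (t + 1), 1, two_pos, by positivity, one_pos, 2, fun N hN η hη hηN => ?_⟩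
  have hη1 : η ≤ 1 := by
    have : (2 : ℝ) ≤ N := by exact_mod_cast hN
    exact hηN.trans (div_le_one_of_le₀ (by linarith [m.cast_nonneg (α := ℝ)])
      (by linarith [m.cast_nonneg (α := ℝ)]))
  set D : ℝ := (N + 1) * (m + 1) ^ 2 * ((t + 1) * A)
  have hD : 0 ≤ D := by positivity [(norm_nonneg _).trans (hA none 0)]
  refine ⟨⌈D * 2 ^ t⌉₊ + 1, fun M hM P pi hP hpi κ hκ k hk ν => ?_⟩
  have hbase := hP.mem_hurwitzSubring_and_hurwitzBounded (by positivity) hpi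
  obtain ⟨z, hz⟩ := mem_hurwitzSubring.1 (prec_mem (fun _ => derivative_mem_hurwitzSubring) hTp
    (fun l j => mem_hurwitzSubring_of_coeff_int (hTSint l j)) (fun κ => (hbase κ).1) (k - 1) κ) ν
  refine ⟨z, by rw [← hz, mul_div_cancel_left₀ _ (by exact_mod_cast ν.factorial_ne_zero)],
    fun hkM => ?_⟩
  have hbd := hurwitzBounded_prec ht1 ht2 (hA none) (fun l j => hA (some (l, j)))
    (fun κ => (hbase κ).2) (fun κ => mem_degreeLT.2 (hP.2.1 κ)) (k - 1) hκ.2 ν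
  rw [hz, Complex.norm_intCast] at hbd
  have hMD : D * 2 ^ t ≤ M := (Nat.le_ceil _).trans (Nat.cast_le.2 ((Nat.le_succ _).trans hM))
  refine hbd.trans (mul_le_mul_of_nonneg_left ?_ (by positivity))
  rw [one_mul]
  exact growth_pow_le_rpow hD hMD (by omega) hη1 ((Nat.cast_le.2 (k.sub_le 1)).trans hkM.le)

/-- **Lemma 4.2 (integrality and size of the coefficients of the `P^{[k]}_κ`).**
In the setting of Siegel's construction, writing
`P^{[k]}_κ(z) = ∑_ν (π_{k,κ,ν}/ν!) z^ν`, one has `π_{k,κ,ν} ∈ ℤ` for all `κ ∈ Ω`,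
`k ≥ 1`, `ν`, and moreover `|π_{k,κ,ν}| ≤ C₀^{ωM/η} M^{C₂ηM}` whenever `k < C₁ηM`,
where `C₀, C₁, C₂ > 0` depend only on `f₁, …, f_m`. Here the differential system is
`f'_l = S_{l,0} + ∑_j S_{l,j} f_j` with `S_{l,j} ∈ ℚ[z,1/z]`, `T(z) = τ z^{i₀}` is the
common denominator of the `S_{l,j}`, `TS l j = T·S_{l,j} ∈ ℤ[z]`, and
`t = max(deg T, max deg(T·S_{l,j}))`. -/
theorem integrality_and_bounds_of_iterated_pade_polynomials
    (m : ℕ) (hm : 1 ≤ m) (a : Fin m → ℕ → ℚ) (ha : ∀ j, IsEFunQ (a j))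
    (hindep : OneFLinIndep m (fun j => Efun (a j)))
    (i₀ τ t : ℕ) (hτ : 0 < τ) (TS : Fin m → Fin (m + 1) → Polynomial ℂ)
    (hTSint : ∀ l j n, ∃ k : ℤ, (TS l j).coeff n = (k : ℂ))
    (ht1 : (Polynomial.C (τ : ℂ) * Polynomial.X ^ i₀ : Polynomial ℂ).natDegree ≤ t)
    (ht2 : ∀ l j, (TS l j).natDegree ≤ t)
    (hsys : ∀ z : ℂ, z ≠ 0 → ∀ l : Fin m,
      HasDerivAt (Efun (a l))
        ((TS l 0).eval z / ((τ : ℂ) * z ^ i₀) +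
          ∑ j : Fin m, (TS l j.succ).eval z / ((τ : ℂ) * z ^ i₀) * Efun (a j) z) z)
    :
    ∃ C₀ C₁ C₂ : ℝ, 0 < C₀ ∧ 0 < C₁ ∧ 0 < C₂ ∧ ∃ N₀ : ℕ, ∀ N : ℕ, N₀ ≤ N →
      ∀ η : ℝ, 0 < η → η ≤ 1 / (3 * ((N : ℝ) + (m : ℝ) - 1)) →
      ∃ M₀ : ℕ, ∀ M : ℕ, M₀ ≤ M →
      ∀ (P : (Fin m → ℕ) → Polynomial ℂ) (pi : (Fin m → ℕ) → ℕ → ℤ),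
        SiegelP m N M
          (Nat.floor (((omegaCard m N : ℝ) - η) * (M : ℝ) / (thetaCard m N : ℝ)))
          (fun j => Efun (a j)) P →
        (∀ κ, inOmega m N κ → ∀ ν < M,
          (P κ).coeff ν = (pi κ ν : ℂ) / (ν.factorial : ℂ) ∧
          (|pi κ ν| : ℝ) ≤ C₀ ^ ((omegaCard m N : ℝ) * (M : ℝ) / η)) →
        ∀ κ, inOmega m N κ → ∀ k : ℕ, 1 ≤ k → ∀ ν : ℕ,
          ∃ pik : ℤ,
            (Prec m N (Polynomial.C (τ : ℂ) * Polynomial.X ^ i₀) TS P (k - 1) κ).coeff ν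
              = (pik : ℂ) / (ν.factorial : ℂ) ∧
            ((k : ℝ) < C₁ * η * (M : ℝ) →
              (|pik| : ℝ) ≤ C₀ ^ ((omegaCard m N : ℝ) * (M : ℝ) / η) *
                (M : ℝ) ^ (C₂ * η * (M : ℝ))) :=
  integrality_and_bounds_of_iterated_pade_polynomials_general m a i₀ τ t TS hTSint ht1 ht2
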